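/- Forced drop: In the abstract linear language λ̂_lin, if Γ ⊩ ae, the variable x occurs at least once in the multiset Γ, and x ∉ fv(erase(ae)), then ae contains a subterm of the form drop Γ′ ae′ with x ∈ Γ′. -/

import Mathlib

/-!
Formalization of the abstract linear language λ̂_lin from "Type Classes for
Lightweight Substructural Types" (Clamp), §4.1.
-/

namespace LamLin

/-- Unannotated terms: variables, abstractions, multiplicative pairs `⊗`, and
additive choices `&`. -/
inductive ETm : Type
| var : String → ETm
| lam : String → ETm → ETm
| tens : ETm → ETm → ETm
| amp : ETm → ETm → ETm
deriving DecidableEq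

/-- Annotated terms: additionally `dup Γ ae` and `drop Γ ae`, where `Γ` is a
multiset of variables. -/
inductive ATm : Type
| var : String → ATm
| lam : String → ATm → ATm
| tens : ATm → ATm → ATm
| amp : ATm → ATm → ATm
| dup : Multiset String → ATm → ATm
| drop : Multiset String → ATm → ATm

/-- Free variables of an unannotated term. -/
def ETm.fv : ETm → Finset String
| .var x => {x}
| .lam x e => e.fv \ {x}
| .tens a b => a.fv ∪ b.fv
| .amp a b => a.fv ∪ b.fv

/-- Free variables of an annotated term; for `dup Γ ae` and `drop Γ ae` this
includes the variables of `Γ` together with the free variables of `ae`. -/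
def ATm.fv : ATm → Finset String
| .var x => {x}
| .lam x a => a.fv \ {x}
| .tens a b => a.fv ∪ b.fv
| .amp a b => a.fv ∪ b.fv
| .dup Γ a => Γ.toFinset ∪ a.fv
| .drop Γ a => Γ.toFinset ∪ a.fv

/-- Well-formedness `Γ ⊩ ae` of an annotated term in a multiset context. -/
inductive WF : Multiset String → ATm → Prop
| var : WF {x} (.var x)
| lam : x ∉ Γ → WF (Γ + {x}) a → WF Γ (.lam x a)
| tens : WF Γ₁ a → WF Γ₂ b → WF (Γ₁ + Γ₂) (.tens a b)
| amp : WF Γ a → WF Γ b → WF Γ (.amp a b)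
| dup : WF (Γ₁ + Γ₂ + Γ₂) a → WF (Γ₁ + Γ₂) (.dup Γ₂ a)
| drop : WF Γ₁ a → WF (Γ₁ + Γ₂) (.drop Γ₂ a)

/-- The dup/drop inference (elaboration) algorithm. -/
def infer : ETm → ATm
| .var x => .var x
| .lam x e =>
    if x ∈ e.fv then .lam x (infer e) else .lam x (.drop {x} (infer e))
| .tens a b => .dup (a.fv ∩ b.fv).val (.tens (infer a) (infer b))
| .amp a b =>
    .amp (.drop (b.fv \ a.fv).val (infer a)) (.drop (a.fv \ b.fv).val (infer b))

/-- Erasure of dup/drop annotations. -/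
def erase : ATm → ETm
| .var x => .var x
| .lam x a => .lam x (erase a)
| .tens a b => .tens (erase a) (erase b)
| .amp a b => .amp (erase a) (erase b)
| .dup _ a => erase a
| .drop _ a => erase a

/-- `Subterm s t`: `s` occurs as a subterm of the annotated term `t`. -/
inductive Subterm : ATm → ATm → Prop
| refl : Subterm a a
| lam : Subterm s a → Subterm s (.lam x a)
| tensL : Subterm s a → Subterm s (.tens a b)
| tensR : Subterm s b → Subterm s (.tens a b)
| ampL : Subterm s a → Subterm s (.amp a b)
| ampR : Subterm s b → Subterm s (.amp a b)
| dup : Subterm s a → Subterm s (.dup Γ a)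
| drop : Subterm s a → Subterm s (.drop Γ a)

/-- `WFSub Γ ae Γₛ aeₛ`: there is a derivation of `Γ ⊩ ae` containing the
judgment `Γₛ ⊩ aeₛ` as a subderivation. -/
inductive WFSub : Multiset String → ATm → Multiset String → ATm → Prop
| refl : WF Γ a → WFSub Γ a Γ a
| lam : x ∉ Γ → WFSub (Γ + {x}) a Γs as → WFSub Γ (.lam x a) Γs as
| tensL : WFSub Γ₁ a Γs as → WF Γ₂ b → WFSub (Γ₁ + Γ₂) (.tens a b) Γs as
| tensR : WF Γ₁ a → WFSub Γ₂ b Γs as → WFSub (Γ₁ + Γ₂) (.tens a b) Γs as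
| ampL : WFSub Γ a Γs as → WF Γ b → WFSub Γ (.amp a b) Γs as
| ampR : WF Γ a → WFSub Γ b Γs as → WFSub Γ (.amp a b) Γs as
| dup : WFSub (Γ₁ + Γ₂ + Γ₂) a Γs as → WFSub (Γ₁ + Γ₂) (.dup Γ₂ a) Γs as
| drop : WFSub Γ₁ a Γs as → WFSub (Γ₁ + Γ₂) (.drop Γ₂ a) Γs as

end LamLin

/-!
Well-formedness is linear: a variable of the context can only leave it through a variable
occurrence, which survives erasure, or through a `drop`; the `dup` and `&` rules never discard it.
Hence, by induction on `Γ ⊩ ae`, every `x ∈ Γ` is free in `erase ae` or dropped inside `ae`.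
-/

namespace LamLin

def DropsVar (x : String) (ae : ATm) : Prop :=
  ∃ (Γ' : Multiset String) (ae' : ATm), Subterm (.drop Γ' ae') ae ∧ x ∈ Γ'

theorem DropsVar.mono {x : String} {a b : ATm} (h : DropsVar x a)
    (hab : ∀ {s}, Subterm s a → Subterm s b) : DropsVar x b :=
  let ⟨Γ', ae', hs, hx⟩ := h
  ⟨Γ', ae', hab hs, hx⟩

theorem mem_fv_erase_or_dropsVar {Γ : Multiset String} {ae : ATm} {x : String}
    (h : WF Γ ae) (hx : x ∈ Γ) : x ∈ (erase ae).fv ∨ DropsVar x ae := by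
  induction h with
  | var => left; simp_all [erase, ETm.fv]
  | @lam Γ y a hy _ ih =>
    have hxy : x ≠ y := by rintro rfl; exact hy hx
    exact (ih (Multiset.mem_add.2 (.inl hx))).imp
      (fun h => by simp [erase, ETm.fv, h, hxy]) (·.mono .lam)
  | tens _ _ ih₁ ih₂ =>
    rcases Multiset.mem_add.1 hx with hx | hx
    · exact (ih₁ hx).imp (fun h => by simp [erase, ETm.fv, h]) (·.mono .tensL)
    · exact (ih₂ hx).imp (fun h => by simp [erase, ETm.fv, h]) (·.mono .tensR)
  | amp _ _ ih _ =>
    exact (ih hx).imp (fun h => by simp [erase, ETm.fv, h]) (·.mono .ampL)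
  | dup _ ih =>
    exact (ih (Multiset.mem_add.2 (.inl hx))).imp id (·.mono .dup)
  | @drop Γ₁ _ Γ₂ _ ih =>
    by_cases hdrop : x ∈ Γ₂
    · exact .inr ⟨Γ₂, _, .refl, hdrop⟩
    · have hx₁ : x ∈ Γ₁ := (Multiset.mem_add.1 hx).resolve_right hdrop
      exact (ih hx₁).imp id (·.mono .drop)

/-- **Forced drop** (Lemma 9 of the Clamp paper).
If `Γ ⊩ ae`, `Γ(x) ≥ 1`, and `x ∉ fv(erase(ae))`, then `ae` contains a
subterm `drop Γ′ ae′` with `x ∈ Γ′`. -/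
theorem forced_drop {Γ : Multiset String} {ae : ATm} {x : String}
    (h : WF Γ ae) (hx : 1 ≤ Γ.count x) (hfv : x ∉ (erase ae).fv) :
    ∃ (Γ' : Multiset String) (ae' : ATm),
      Subterm (.drop Γ' ae') ae ∧ x ∈ Γ' := by
  exact (mem_fv_erase_or_dropsVar h (Multiset.count_pos.mp hx)).resolve_left hfv

end LamLin
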